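/- Let θ be parameters of NN({m_l}_{l=0}^L), fix 1 ≤ l ≤ L-1, s ∈ [m_l], α ∈ ℝ, and let θ' = T^α_{l,s}(θ) be the one-step splitting embedding of θ. Then for every input-output pair (x, y), the error vectors satisfy z^[l']_{θ'} = z^[l']_θ for every l' ∈ [L] with l' ≠ l, and z^[l]_{θ'} = [(z^[l]_θ)_{1:s-1}, (1-α)(z^[l]_θ)_s, (z^[l]_θ)_{s+1:m_l}, α(z^[l]_θ)_s] (the s-th entry is multiplied by (1-α) and a new last entry equal to α times the old s-th entry is appended). -/

import Mathlib

/-! The embedding only duplicates neuron `s` of layer `p + 1` and splits its outgoing weights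
in the ratio `1 - α : α`. Forward, the new neuron computes exactly what neuron `s` computes,
so every later pre-activation, the output, and hence `∇ℓ` and all error vectors above layer
`p + 1` are unchanged. At layer `p + 1` the error vector is `(W^{[p+2]})ᵀ e^{[p+2]}`, whose
columns were split, which splits `z^{[p+1]}` in the same ratio. Below it, the two halves of the
split recombine in `(W^{[p+1]})ᵀ (z^{[p+1]} ∘ g^{[p+1]})` because both neurons carry the same
row of `W^{[p+1]}` and the same `g`, so nothing changes there either. -/

namespace EmbeddingPrinciple

/-- Parameters of a fully-connected NN: `(θ l).1 i j` is the weight `W^{[l+1]}_{ij}`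
and `(θ l).2 i` is the bias `b^{[l+1]}_i` (the paper's layer `l` corresponds to index `l-1`).
Only the coordinates below the widths are meaningful for a concrete architecture. -/
abbrev NNParams : Type := ℕ → (ℕ → ℕ → ℝ) × (ℕ → ℝ)

/-- Feature vectors `f^{[l]}` (entrywise activation `σ`); `m` is the width function. -/
noncomputable def feat (σ : ℝ → ℝ) (m : ℕ → ℕ) (θ : NNParams) (x : ℕ → ℝ) : ℕ → ℕ → ℝ
  | 0 => x
  | l + 1 => fun i =>
      σ ((∑ j ∈ Finset.range (m l), (θ l).1 i j * feat σ m θ x l j) + (θ l).2 i)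

/-- Pre-activation of layer `l+1`: `W^{[l+1]} f^{[l]} + b^{[l+1]}`. -/
noncomputable def preact (σ : ℝ → ℝ) (m : ℕ → ℕ) (θ : NNParams) (x : ℕ → ℝ) (l i : ℕ) : ℝ :=
  (∑ j ∈ Finset.range (m l), (θ l).1 i j * feat σ m θ x l j) + (θ l).2 i

/-- Output `f_θ` of the `(K+1)`-layer network (the paper's `L` is `K+1`). -/
noncomputable def nnOut (σ : ℝ → ℝ) (m : ℕ → ℕ) (K : ℕ) (θ : NNParams) (x : ℕ → ℝ) :
    ℕ → ℝ := fun i => preact σ m θ x K i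

/-- Feature gradient `g^{[l+1]} = σ'(W^{[l+1]} f^{[l]} + b^{[l+1]})`. -/
noncomputable def gFeat (σ : ℝ → ℝ) (m : ℕ → ℕ) (θ : NNParams) (x : ℕ → ℝ) (l i : ℕ) : ℝ :=
  deriv σ (preact σ m θ x l i)

/-- Output truncated to the valid output coordinates. -/
noncomputable def truncOut (σ : ℝ → ℝ) (m : ℕ → ℕ) (K : ℕ) (θ : NNParams) (x : ℕ → ℝ) :
    ℕ → ℝ := fun i => if i < m (K + 1) then nnOut σ m K θ x i else 0

/-- Empirical risk `R_S(θ) = (1/n) ∑ᵢ ℓ(f_θ(xᵢ), yᵢ)`. -/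
noncomputable def risk (σ : ℝ → ℝ) (m : ℕ → ℕ) (K : ℕ)
    (loss : (ℕ → ℝ) → (ℕ → ℝ) → ℝ) {n : ℕ} (X Y : Fin n → ℕ → ℝ) (θ : NNParams) : ℝ :=
  (n : ℝ)⁻¹ * ∑ a : Fin n, loss (truncOut σ m K θ (X a)) (Y a)

/-- Update a single weight coordinate. -/
def updW (θ : NNParams) (l i j : ℕ) (t : ℝ) : NNParams := fun l' =>
  if l' = l then ((fun i' j' => if i' = i ∧ j' = j then t else (θ l).1 i' j'), (θ l).2)
  else θ l'

/-- Update a single bias coordinate. -/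
def updB (θ : NNParams) (l i : ℕ) (t : ℝ) : NNParams := fun l' =>
  if l' = l then ((θ l).1, fun i' => if i' = i then t else (θ l).2 i') else θ l'

/-- `θ` is a critical point of `R` : all partial derivatives with respect to the valid
coordinates of the `(K+1)`-layer architecture with width function `m` vanish. -/
def IsCritical (R : NNParams → ℝ) (m : ℕ → ℕ) (K : ℕ) (θ : NNParams) : Prop :=
  (∀ l, l ≤ K → ∀ i, i < m (l + 1) → ∀ j, j < m l →
      deriv (fun t => R (updW θ l i j t)) ((θ l).1 i j) = 0) ∧
  (∀ l, l ≤ K → ∀ i, i < m (l + 1) →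
      deriv (fun t => R (updB θ l i t)) ((θ l).2 i) = 0)

/-- Equality of two parameter tuples on all valid coordinates of the architecture. -/
def ParamEqOn (m : ℕ → ℕ) (K : ℕ) (θ₁ θ₂ : NNParams) : Prop :=
  ∀ l, l ≤ K → ∀ i, i < m (l + 1) →
    (∀ j, j < m l → (θ₁ l).1 i j = (θ₂ l).1 i j) ∧ (θ₁ l).2 i = (θ₂ l).2 i

/-- Error vectors by reversed index: `errRev … t = z^{[K+1-t]}`, where `z^{[K+1]} = ∇ℓ`
(represented by the function `dloss`) and `z^{[l]} = (W^{[l+1]})ᵀ (z^{[l+1]} ∘ g^{[l+1]})`. -/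
noncomputable def errRev (σ : ℝ → ℝ) (m : ℕ → ℕ) (K : ℕ) (θ : NNParams)
    (dloss : (ℕ → ℝ) → (ℕ → ℝ) → ℕ → ℝ) (x y : ℕ → ℝ) : ℕ → ℕ → ℝ
  | 0 => dloss (truncOut σ m K θ x) y
  | t + 1 => fun j =>
      ∑ i ∈ Finset.range (m (K + 1 - t)),
        (θ (K - t)).1 i j *
          (errRev σ m K θ dloss x y t i * (if t = 0 then 1 else gFeat σ m θ x (K - t) i))

/-- `e^{[l]} = z^{[l]} ∘ g^{[l]}` (with `g^{[K+1]} = 1`). -/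
noncomputable def errE (σ : ℝ → ℝ) (m : ℕ → ℕ) (K : ℕ) (θ : NNParams)
    (dloss : (ℕ → ℝ) → (ℕ → ℝ) → ℕ → ℝ) (x y : ℕ → ℝ) (l i : ℕ) : ℝ :=
  errRev σ m K θ dloss x y (K + 1 - l) i *
    (if l = K + 1 then 1 else gFeat σ m θ x (l - 1) i)

/-- Differentiability of the loss in its first argument (on each finite-dimensional
coordinate block). -/
def LossDiff (loss : (ℕ → ℝ) → (ℕ → ℝ) → ℝ) : Prop :=
  ∀ (y : ℕ → ℝ) (d : ℕ),
    Differentiable ℝ (fun u : Fin d → ℝ => loss (fun i => if h : i < d then u ⟨i, h⟩ else 0) y)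

/-- Widths after adding one neuron in the paper's layer `p+1`. -/
def widen (m : ℕ → ℕ) (p : ℕ) : ℕ → ℕ := fun l => if l = p + 1 then m (p + 1) + 1 else m l

/-- One-step null embedding `T^α_{l,0}` at the paper's layer `l = p+1`. -/
def nullEmb (m : ℕ → ℕ) (p : ℕ) (α : ℝ) (θ : NNParams) : NNParams := fun l =>
  if l = p then
    ((fun i j => if i = m (p + 1) then 0 else (θ p).1 i j),
     (fun i => if i = m (p + 1) then α else (θ p).2 i))
  else if l = p + 1 then
    ((fun i j => if j = m (p + 1) then 0 else (θ (p + 1)).1 i j), (θ (p + 1)).2)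
  else θ l

/-- One-step splitting embedding `T^α_{l,s}` at the paper's layer `l = p+1`,
splitting neuron `s`. -/
def splitEmb (m : ℕ → ℕ) (p s : ℕ) (α : ℝ) (θ : NNParams) : NNParams := fun l =>
  if l = p then
    ((fun i j => if i = m (p + 1) then (θ p).1 s j else (θ p).1 i j),
     (fun i => if i = m (p + 1) then (θ p).2 s else (θ p).2 i))
  else if l = p + 1 then
    ((fun i j =>
        if j = s then (1 - α) * (θ (p + 1)).1 i s
        else if j = m (p + 1) then α * (θ (p + 1)).1 i s
        else (θ (p + 1)).1 i j),
     (θ (p + 1)).2)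
  else θ l

/-- `[v_{<s}, (1 - α) v_s, v_{s<·<n}, α v_s]`, with the new entry at index `n`. -/
def splitVec (n s : ℕ) (α : ℝ) (v : ℕ → ℝ) : ℕ → ℝ := fun j =>
  if j = s then (1 - α) * v s else if j = n then α * v s else v j

/-- The neuron of the original layer whose copy sits at index `i` of the widened layer. -/
def splitIdx (n s i : ℕ) : ℕ := if i = n then s else i

section SplitVec

variable {n s : ℕ} {α : ℝ}

@[simp]
lemma splitVec_self (v : ℕ → ℝ) : splitVec n s α v s = (1 - α) * v s := if_pos rfl

lemma splitVec_new (hs : s ≠ n) (v : ℕ → ℝ) : splitVec n s α v n = α * v s := by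
  simp [splitVec, hs.symm]

lemma splitVec_of_ne (v : ℕ → ℝ) {j : ℕ} (hjs : j ≠ s) (hjn : j ≠ n) :
    splitVec n s α v j = v j := by
  simp [splitVec, hjs, hjn]

lemma sum_range_succ_splitVec (hs : s < n) (v : ℕ → ℝ) :
    ∑ j ∈ Finset.range (n + 1), splitVec n s α v j = ∑ j ∈ Finset.range n, v j := by
  have hs_mem : s ∈ Finset.range n := Finset.mem_range.mpr hs
  have hsplit : ∀ j ∈ Finset.range n,
      splitVec n s α v j = Function.update v s ((1 - α) * v s) j := by
    intro j hj
    rcases eq_or_ne j s with rfl | hjs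
    · simp
    · simp [splitVec_of_ne v hjs (Finset.mem_range.mp hj).ne, hjs]
  rw [Finset.sum_range_succ, Finset.sum_congr rfl hsplit, Finset.sum_update_of_mem hs_mem,
    Finset.sum_eq_add_sum_sdiff_singleton_of_mem hs_mem v, splitVec_new hs.ne]
  ring

lemma sum_splitVec_mul (t : Finset ℕ) (v : ℕ → ℕ → ℝ) (c : ℕ → ℝ) (j : ℕ) :
    ∑ i ∈ t, splitVec n s α (v i) j * c i = splitVec n s α (fun k => ∑ i ∈ t, v i k * c i) j := by
  unfold splitVec
  split_ifs <;> simp only [Finset.mul_sum, mul_assoc]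

lemma splitVec_mul_comp_splitIdx (hs : s ≠ n) (v w : ℕ → ℝ) (j : ℕ) :
    splitVec n s α v j * w (splitIdx n s j) = splitVec n s α (fun k => v k * w k) j := by
  unfold splitVec splitIdx
  rcases eq_or_ne j s with rfl | hjs
  · simp only [↓reduceIte, hs]; ring
  · rcases eq_or_ne j n with rfl | hjn
    · simp only [hjs, ↓reduceIte]; ring
    · simp [hjs, hjn]

end SplitVec

section SplitEmb

variable {m : ℕ → ℕ} {p s : ℕ} {α : ℝ} {θ : NNParams}

lemma widen_of_ne {l : ℕ} (hl : l ≠ p + 1) : widen m p l = m l := if_neg hl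

@[simp]
lemma widen_self : widen m p (p + 1) = m (p + 1) + 1 := if_pos rfl

lemma splitEmb_self :
    splitEmb m p s α θ p =
      (fun i => (θ p).1 (splitIdx (m (p + 1)) s i),
        fun i => (θ p).2 (splitIdx (m (p + 1)) s i)) := by
  ext i <;> by_cases hi : i = m (p + 1) <;> simp [splitEmb, splitIdx, hi]

lemma splitEmb_succ :
    splitEmb m p s α θ (p + 1) =
      (fun i => splitVec (m (p + 1)) s α ((θ (p + 1)).1 i), (θ (p + 1)).2) := by
  simp only [splitEmb, if_neg (Nat.succ_ne_self p)]
  rfl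

lemma splitEmb_of_ne {l : ℕ} (h₁ : l ≠ p) (h₂ : l ≠ p + 1) : splitEmb m p s α θ l = θ l := by
  simp [splitEmb, h₁, h₂]

end SplitEmb

section Forward

variable (σ : ℝ → ℝ) (m : ℕ → ℕ) {p s : ℕ} (α : ℝ) (θ : NNParams) (x : ℕ → ℝ)

lemma feat_succ (l i : ℕ) :
    feat σ m θ x (l + 1) i = σ (preact σ m θ x l i) := rfl

lemma preact_splitEmb_of_feat (hs : s < m (p + 1)) (l : ℕ)
    (hfeat : ∀ j, feat σ (widen m p) (splitEmb m p s α θ) x l j =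
      feat σ m θ x l (if l = p + 1 then splitIdx (m (p + 1)) s j else j)) (i : ℕ) :
    preact σ (widen m p) (splitEmb m p s α θ) x l i =
      preact σ m θ x l (if l = p then splitIdx (m (p + 1)) s i else i) := by
  rcases eq_or_ne l p with rfl | hlp
  · simp only [preact, hfeat, widen_of_ne (Nat.ne_add_one l), splitEmb_self, if_pos,
      if_neg (Nat.ne_add_one l)]
  rw [if_neg hlp]
  rcases eq_or_ne l (p + 1) with rfl | hlp₁
  · have hsum : ∀ j, (splitEmb m p s α θ (p + 1)).1 i j *
        feat σ (widen m p) (splitEmb m p s α θ) x (p + 1) j =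
        splitVec (m (p + 1)) s α (fun k => (θ (p + 1)).1 i k * feat σ m θ x (p + 1) k) j := by
      intro j
      rw [hfeat, if_pos rfl, splitEmb_succ]
      exact splitVec_mul_comp_splitIdx hs.ne _ _ j
    rw [preact, preact, widen_self, Finset.sum_congr rfl (fun j _ => hsum j),
      sum_range_succ_splitVec hs, splitEmb_succ]
  · simp only [preact, hfeat, if_neg hlp₁, widen_of_ne hlp₁, splitEmb_of_ne hlp hlp₁]

lemma preact_splitEmb (hs : s < m (p + 1)) (l i : ℕ) :
    preact σ (widen m p) (splitEmb m p s α θ) x l i =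
      preact σ m θ x l (if l = p then splitIdx (m (p + 1)) s i else i) := by
  induction l generalizing i with
  | zero => exact preact_splitEmb_of_feat σ m α θ x hs 0 (fun j => by simp [feat]) i
  | succ l ih =>
    refine preact_splitEmb_of_feat σ m α θ x hs (l + 1) (fun j => ?_) i
    simp only [feat_succ, ih, Nat.add_right_cancel_iff]

lemma gFeat_splitEmb (hs : s < m (p + 1)) (l i : ℕ) :
    gFeat σ (widen m p) (splitEmb m p s α θ) x l i =
      gFeat σ m θ x l (if l = p then splitIdx (m (p + 1)) s i else i) :=
  congrArg (deriv σ) (preact_splitEmb σ m α θ x hs l i)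

lemma truncOut_splitEmb {K : ℕ} (hp : p < K) (hs : s < m (p + 1)) :
    truncOut σ (widen m p) K (splitEmb m p s α θ) x = truncOut σ m K θ x := by
  funext i
  simp only [truncOut, nnOut, preact_splitEmb σ m α θ x hs, if_neg hp.ne',
    widen_of_ne (by omega : K + 1 ≠ p + 1)]

end Forward

section Backward

variable (σ : ℝ → ℝ) (m : ℕ → ℕ) {p s : ℕ} (α : ℝ) (θ : NNParams) (x : ℕ → ℝ) {K : ℕ}
  (dloss : (ℕ → ℝ) → (ℕ → ℝ) → ℕ → ℝ) (y : ℕ → ℝ)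

lemma errRev_splitEmb_succ_of_ne (hs : s < m (p + 1)) {t : ℕ} (h₀ : K - t ≠ p)
    (h₁ : K - t ≠ p + 1)
    (h : errRev σ (widen m p) K (splitEmb m p s α θ) dloss x y t = errRev σ m K θ dloss x y t) :
    errRev σ (widen m p) K (splitEmb m p s α θ) dloss x y (t + 1) =
      errRev σ m K θ dloss x y (t + 1) := by
  funext j
  simp only [errRev, h, gFeat_splitEmb σ m α θ x hs, if_neg h₀,
    widen_of_ne (show K + 1 - t ≠ p + 1 by omega), splitEmb_of_ne h₀ h₁]

lemma errRev_splitEmb_of_lt (hp : p < K) (hs : s < m (p + 1)) {t : ℕ} (ht : t < K - p) :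
    errRev σ (widen m p) K (splitEmb m p s α θ) dloss x y t = errRev σ m K θ dloss x y t := by
  induction t with
  | zero => simp only [errRev, truncOut_splitEmb σ m α θ x hp hs]
  | succ t ih =>
    exact errRev_splitEmb_succ_of_ne σ m α θ x dloss y hs (by omega) (by omega)
      (ih (by omega))

lemma errRev_splitEmb_split_layer (hp : p < K) (hs : s < m (p + 1)) :
    errRev σ (widen m p) K (splitEmb m p s α θ) dloss x y (K - p) =
      splitVec (m (p + 1)) s α (errRev σ m K θ dloss x y (K - p)) := by
  obtain ⟨t, ht⟩ : ∃ t, K - p = t + 1 := ⟨K - p - 1, by omega⟩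
  have h₁ : K - t = p + 1 := by omega
  have h₂ : K + 1 - t = p + 1 + 1 := by omega
  funext j
  rw [ht]
  simp only [errRev, h₁, h₂,
    errRev_splitEmb_of_lt σ m α θ x dloss y hp hs (show t < K - p by omega),
    gFeat_splitEmb σ m α θ x hs, if_neg (Nat.succ_ne_self p),
    widen_of_ne (Nat.succ_ne_self (p + 1)), splitEmb_succ]
  exact sum_splitVec_mul _ _ _ j

lemma errRev_splitEmb_below_split_layer (hp : p < K) (hs : s < m (p + 1)) :
    errRev σ (widen m p) K (splitEmb m p s α θ) dloss x y (K - p + 1) =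
      errRev σ m K θ dloss x y (K - p + 1) := by
  have h₀ : K - (K - p) = p := by omega
  have h₁ : K + 1 - (K - p) = p + 1 := by omega
  have hsplit : ∀ (z g : ℕ → ℝ) j i, (θ p).1 (splitIdx (m (p + 1)) s i) j *
      (splitVec (m (p + 1)) s α z i * g (splitIdx (m (p + 1)) s i)) =
      splitVec (m (p + 1)) s α (fun k => z k * ((θ p).1 k j * g k)) i := by
    intro z g j i
    rw [mul_left_comm]
    exact splitVec_mul_comp_splitIdx hs.ne z (fun k => (θ p).1 k j * g k) i
  funext j
  simp only [errRev, h₀, h₁, if_neg (show K - p ≠ 0 by omega), widen_self, splitEmb_self,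
    errRev_splitEmb_split_layer σ m α θ x dloss y hp hs, gFeat_splitEmb σ m α θ x hs, if_pos,
    hsplit, sum_range_succ_splitVec hs]
  exact Finset.sum_congr rfl fun i _ => by ring

lemma errRev_splitEmb_of_gt (hp : p < K) (hs : s < m (p + 1)) {t : ℕ} (ht : K - p < t)
    (htK : t ≤ K) :
    errRev σ (widen m p) K (splitEmb m p s α θ) dloss x y t = errRev σ m K θ dloss x y t := by
  induction t with
  | zero => omega
  | succ t ih =>
    rcases (Nat.lt_succ_iff.mp ht).eq_or_lt with rfl | hlt
    · exact errRev_splitEmb_below_split_layer σ m α θ x dloss y hp hs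
    · exact errRev_splitEmb_succ_of_ne σ m α θ x dloss y hs (by omega) (by omega)
        (ih hlt (by omega))

end Backward

theorem one_step_splitting_embedding_error_vectors_general
    (K : ℕ) (m : ℕ → ℕ) (σ : ℝ → ℝ)
    (dloss : (ℕ → ℝ) → (ℕ → ℝ) → ℕ → ℝ)
    (p : ℕ) (hp : p < K) (s : ℕ) (hs : s < m (p + 1)) (α : ℝ)
    (θ : NNParams) (x y : ℕ → ℝ) :
    -- for every layer `l' ∈ [L]`, `l' ≠ p+1`, the error vectors agree
    (∀ l', 1 ≤ l' → l' ≤ K + 1 → l' ≠ p + 1 → ∀ j,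
        errRev σ (widen m p) K (splitEmb m p s α θ) dloss x y (K + 1 - l') j =
          errRev σ m K θ dloss x y (K + 1 - l') j) ∧
    -- at layer `p+1`: entries other than `s` are kept, the `s`-th entry is multiplied
    -- by `(1-α)`, and `α` times the old `s`-th entry is appended
    (∀ j, j < m (p + 1) → j ≠ s →
        errRev σ (widen m p) K (splitEmb m p s α θ) dloss x y (K - p) j =
          errRev σ m K θ dloss x y (K - p) j) ∧
    errRev σ (widen m p) K (splitEmb m p s α θ) dloss x y (K - p) s =
      (1 - α) * errRev σ m K θ dloss x y (K - p) s ∧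
    errRev σ (widen m p) K (splitEmb m p s α θ) dloss x y (K - p) (m (p + 1)) =
      α * errRev σ m K θ dloss x y (K - p) s := by
  have hsplit := errRev_splitEmb_split_layer σ m α θ x dloss y hp hs
  refine ⟨fun l' _ hl'K hl'p j => ?_, fun j hj hjs => ?_, ?_, ?_⟩
  · rcases Nat.lt_or_gt_of_ne (show K + 1 - l' ≠ K - p by omega) with h | h
    · rw [errRev_splitEmb_of_lt σ m α θ x dloss y hp hs h]
    · rw [errRev_splitEmb_of_gt σ m α θ x dloss y hp hs h (by omega)]
  · rw [hsplit, splitVec_of_ne _ hjs hj.ne]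
  · rw [hsplit, splitVec_self]
  · rw [hsplit, splitVec_new hs.ne]

/-- error vectors under the one-step splitting embedding.
`errRev … (K+1-l')` is the paper's `z^{[l']}`; `dloss` represents `∇ℓ`. -/
theorem one_step_splitting_embedding_error_vectors
    (K : ℕ) (hK : 1 ≤ K) (m : ℕ → ℕ) (σ : ℝ → ℝ) (hσ : Differentiable ℝ σ)
    (loss : (ℕ → ℝ) → (ℕ → ℝ) → ℝ) (hloss : LossDiff loss)
    (dloss : (ℕ → ℝ) → (ℕ → ℝ) → ℕ → ℝ)
    (hdl : ∀ (u y : ℕ → ℝ) (i : ℕ),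
        HasDerivAt (fun t => loss (Function.update u i t) y) (dloss u y i) (u i))
    (p : ℕ) (hp : p < K) (s : ℕ) (hs : s < m (p + 1)) (α : ℝ)
    (θ : NNParams) (x y : ℕ → ℝ) :
    -- for every layer `l' ∈ [L]`, `l' ≠ p+1`, the error vectors agree
    (∀ l', 1 ≤ l' → l' ≤ K + 1 → l' ≠ p + 1 → ∀ j,
        errRev σ (widen m p) K (splitEmb m p s α θ) dloss x y (K + 1 - l') j =
          errRev σ m K θ dloss x y (K + 1 - l') j) ∧
    -- at layer `p+1`: entries other than `s` are kept, the `s`-th entry is multiplied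
    -- by `(1-α)`, and `α` times the old `s`-th entry is appended
    (∀ j, j < m (p + 1) → j ≠ s →
        errRev σ (widen m p) K (splitEmb m p s α θ) dloss x y (K - p) j =
          errRev σ m K θ dloss x y (K - p) j) ∧
    errRev σ (widen m p) K (splitEmb m p s α θ) dloss x y (K - p) s =
      (1 - α) * errRev σ m K θ dloss x y (K - p) s ∧
    errRev σ (widen m p) K (splitEmb m p s α θ) dloss x y (K - p) (m (p + 1)) =
      α * errRev σ m K θ dloss x y (K - p) s :=
  one_step_splitting_embedding_error_vectors_general K m σ dloss p hp s hs α θ x y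

end EmbeddingPrinciple
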